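/- For every real number ε > 0, the periodic schedule |121121211213| (i.e., S(t) = 1 if t ≡ 0, 2, 3, 5, 7, 8, 10 (mod 12), S(t) = 2 if t ≡ 1, 4, 6, 9 (mod 12), and S(t) = 3 if t ≡ 11 (mod 12)) is valid for the real-valued pinwheel instance (12/7, 3 + ε, 12). -/

import Mathlib

/-- A schedule `S : ℤ → Fin k` is valid for the real-valued pinwheel instance
`a : Fin k → ℝ` if for every task `i`, every positive integer `l`, and every
integer `m`, task `i` is performed at least `l` times on the days
`t ∈ [m, m + ⌈l * a i⌉)`. -/
def PinValid {k : ℕ} (a : Fin k → ℝ) (S : ℤ → Fin k) : Prop :=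
  ∀ i : Fin k, ∀ l : ℕ, 0 < l → ∀ m : ℤ,
    (l : ℕ) ≤ ((Finset.Ico m (m + ⌈(l : ℝ) * a i⌉)).filter (fun t => S t = i)).card

/-- A real-valued pinwheel instance is schedulable if some schedule is valid for it. -/
def PinSchedulable {k : ℕ} (a : Fin k → ℝ) : Prop := ∃ S : ℤ → Fin k, PinValid a S

/-- The periodic schedule `|121121211213|`. -/
def S121121211213 : ℤ → Fin 3 := fun t =>
  if t % 12 = 11 then 2
  else if t % 12 = 1 ∨ t % 12 = 4 ∨ t % 12 = 6 ∨ t % 12 = 9 then 1 else 0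

/-- Count of occurrences of task `i` in the window `[m, m+n)`. -/
noncomputable def cnt (i : Fin 3) (m : ℤ) (n : ℕ) : ℕ :=
  ((Finset.Ico m (m + (n:ℤ))).filter (fun t => S121121211213 t = i)).card

lemma S_per (t : ℤ) : S121121211213 (t + 12) = S121121211213 t := by
  simp [S121121211213, show (t+12)%12 = t%12 from by omega]

lemma cnt_shift (i : Fin 3) (m : ℤ) (n : ℕ) : cnt i (m + 12) n = cnt i m n := by
  unfold cnt
  apply Finset.card_bij' (fun t _ => t - 12) (fun t _ => t + 12)
  · intro t _; ring
  · intro t _; ring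
  · intro t ht
    simp only [Finset.mem_filter, Finset.mem_Ico] at *
    refine ⟨⟨by omega, by omega⟩, ?_⟩
    rw [← S_per (t-12)]
    simpa using ht.2
  · intro t ht
    simp only [Finset.mem_filter, Finset.mem_Ico] at *
    exact ⟨⟨by omega, by omega⟩, by rw [S_per]; exact ht.2⟩

lemma cnt_add_mul (i : Fin 3) (m k : ℤ) (n : ℕ) : cnt i (m + 12*k) n = cnt i m n := by
  induction k using Int.induction_on with
  | zero => simp
  | succ k ih => rw [show m + 12*((k:ℤ)+1) = (m + 12*k) + 12 by ring, cnt_shift, ih]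
  | pred k ih =>
      have h := cnt_shift i (m + 12*(-(k:ℤ)-1)) n
      rw [show m + 12*(-(k:ℤ)-1) + 12 = m + 12*(-(k:ℤ)) by ring] at h
      rw [← h]; exact ih

lemma cnt_emod (i : Fin 3) (m : ℤ) (n : ℕ) : cnt i m n = cnt i (m % 12) n := by
  conv_lhs => rw [show m = m % 12 + 12 * (m / 12) by omega]
  exact cnt_add_mul i (m % 12) (m / 12) n

lemma cnt_split (i : Fin 3) (m : ℤ) (a b : ℕ) :
    cnt i m (a + b) = cnt i m a + cnt i (m + a) b := by
  unfold cnt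
  rw [show m + ((a+b:ℕ):ℤ) = (m + a) + b by push_cast; ring,
    ← Finset.Ico_union_Ico_eq_Ico (show m ≤ m + (a:ℤ) by omega)
      (show m + (a:ℤ) ≤ m + (a:ℤ) + (b:ℤ) by omega),
    Finset.filter_union, Finset.card_union_of_disjoint]
  exact Finset.disjoint_filter_filter (Finset.Ico_disjoint_Ico_consecutive m (m+a) (m+a+b))

lemma cnt_12 (i : Fin 3) (m : ℤ) : cnt i m 12 = ![7,4,1] i := by
  rw [cnt_emod]
  have h1 : 0 ≤ m % 12 := Int.emod_nonneg m (by norm_num)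
  have h2 : m % 12 < 12 := Int.emod_lt_of_pos m (by norm_num)
  set m0 := m % 12
  interval_cases m0 <;> fin_cases i <;> decide

lemma cnt_block (i : Fin 3) (q s : ℕ) :
    ∀ m : ℤ, cnt i m (12*q + s) = q * ![7,4,1] i + cnt i m s := by
  induction q with
  | zero => intro m; simp
  | succ q ih =>
      intro m
      rw [show 12*(q+1) + s = 12 + (12*q + s) by ring, cnt_split, cnt_12, ih,
        show m + ((12:ℕ):ℤ) = m + 12 by norm_num, cnt_shift]
      ring

lemma cnt_lb (i : Fin 3) (s r : ℕ) (h : ∀ m0 : ℤ, 0 ≤ m0 → m0 < 12 → r ≤ cnt i m0 s)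
    (m : ℤ) : r ≤ cnt i m s := by
  rw [cnt_emod]
  exact h _ (Int.emod_nonneg m (by norm_num)) (Int.emod_lt_of_pos m (by norm_num))

lemma main_step (i : Fin 3) (m : ℤ) (q s r c : ℕ) (x : ℝ)
    (hc : ![7,4,1] i = c)
    (hx : ((12*q + s : ℕ) : ℤ) ≤ ⌈x⌉)
    (hr : ∀ m0 : ℤ, 0 ≤ m0 → m0 < 12 → r ≤ cnt i m0 s) :
    q * c + r ≤
      ((Finset.Ico m (m + ⌈x⌉)).filter (fun t => S121121211213 t = i)).card := by
  calc q * c + r ≤ cnt i m (12*q + s) := by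
        rw [cnt_block, hc]
        exact Nat.add_le_add_left (cnt_lb i s r hr m) _
    _ ≤ _ := by
        apply Finset.card_le_card
        apply Finset.filter_subset_filter
        exact Finset.Ico_subset_Ico le_rfl (by omega)

theorem valid_121121211213 (ε : ℝ) (hε : 0 < ε) :
    PinValid ![(12 : ℝ) / 7, 3 + ε, 12] S121121211213 := by
  intro i l hl m
  fin_cases i
  · -- task 0, a = 12/7
    show l ≤ ((Finset.Ico m (m + ⌈(l:ℝ) * (12/7)⌉)).filter
      (fun t => S121121211213 t = 0)).card
    obtain ⟨q, r, hr7, rfl⟩ : ∃ q r, r < 7 ∧ l = 7*q + r := ⟨l/7, l%7, by omega, by omega⟩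
    interval_cases r
    · refine le_trans (show 7*q+0 ≤ q*7+0 by omega) (main_step 0 m q 0 0 7 _ rfl ?_ ?_)
      · have h : 12*(q:ℤ)+0-1 < ⌈((7*q+0:ℕ):ℝ) * (12/7)⌉ :=
          Int.lt_ceil.mpr (by push_cast; nlinarith)
        push_cast at h ⊢; omega
      · intro m0 h1 h2; interval_cases m0 <;> decide
    · refine le_trans (show 7*q+1 ≤ q*7+1 by omega) (main_step 0 m q 2 1 7 _ rfl ?_ ?_)
      · have h : 12*(q:ℤ)+2-1 < ⌈((7*q+1:ℕ):ℝ) * (12/7)⌉ :=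
          Int.lt_ceil.mpr (by push_cast; nlinarith)
        push_cast at h ⊢; omega
      · intro m0 h1 h2; interval_cases m0 <;> decide
    · refine le_trans (show 7*q+2 ≤ q*7+2 by omega) (main_step 0 m q 4 2 7 _ rfl ?_ ?_)
      · have h : 12*(q:ℤ)+4-1 < ⌈((7*q+2:ℕ):ℝ) * (12/7)⌉ :=
          Int.lt_ceil.mpr (by push_cast; nlinarith)
        push_cast at h ⊢; omega
      · intro m0 h1 h2; interval_cases m0 <;> decide
    · refine le_trans (show 7*q+3 ≤ q*7+3 by omega) (main_step 0 m q 6 3 7 _ rfl ?_ ?_)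
      · have h : 12*(q:ℤ)+6-1 < ⌈((7*q+3:ℕ):ℝ) * (12/7)⌉ :=
          Int.lt_ceil.mpr (by push_cast; nlinarith)
        push_cast at h ⊢; omega
      · intro m0 h1 h2; interval_cases m0 <;> decide
    · refine le_trans (show 7*q+4 ≤ q*7+4 by omega) (main_step 0 m q 7 4 7 _ rfl ?_ ?_)
      · have h : 12*(q:ℤ)+7-1 < ⌈((7*q+4:ℕ):ℝ) * (12/7)⌉ :=
          Int.lt_ceil.mpr (by push_cast; nlinarith)
        push_cast at h ⊢; omega
      · intro m0 h1 h2; interval_cases m0 <;> decide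
    · refine le_trans (show 7*q+5 ≤ q*7+5 by omega) (main_step 0 m q 9 5 7 _ rfl ?_ ?_)
      · have h : 12*(q:ℤ)+9-1 < ⌈((7*q+5:ℕ):ℝ) * (12/7)⌉ :=
          Int.lt_ceil.mpr (by push_cast; nlinarith)
        push_cast at h ⊢; omega
      · intro m0 h1 h2; interval_cases m0 <;> decide
    · refine le_trans (show 7*q+6 ≤ q*7+6 by omega) (main_step 0 m q 11 6 7 _ rfl ?_ ?_)
      · have h : 12*(q:ℤ)+11-1 < ⌈((7*q+6:ℕ):ℝ) * (12/7)⌉ :=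
          Int.lt_ceil.mpr (by push_cast; nlinarith)
        push_cast at h ⊢; omega
      · intro m0 h1 h2; interval_cases m0 <;> decide
  · -- task 1, a = 3 + ε
    show l ≤ ((Finset.Ico m (m + ⌈(l:ℝ) * (3+ε)⌉)).filter
      (fun t => S121121211213 t = 1)).card
    obtain ⟨q, r, hr4, rfl⟩ : ∃ q r, r < 4 ∧ l = 4*q + r := ⟨l/4, l%4, by omega, by omega⟩
    have hlp : (0:ℝ) < 4*(q:ℝ) + (r:ℝ) := by
      have : (0:ℕ) < 4*q + r := hl
      exact_mod_cast this
    interval_cases r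
    · refine le_trans (show 4*q+0 ≤ q*4+0 by omega) (main_step 1 m q 1 0 4 _ rfl ?_ ?_)
      · have h : 12*(q:ℤ)+1-1 < ⌈((4*q+0:ℕ):ℝ) * (3+ε)⌉ :=
          Int.lt_ceil.mpr (by push_cast; push_cast at hlp; nlinarith)
        push_cast at h ⊢; omega
      · intro m0 h1 h2; interval_cases m0 <;> decide
    · refine le_trans (show 4*q+1 ≤ q*4+1 by omega) (main_step 1 m q 4 1 4 _ rfl ?_ ?_)
      · have h : 12*(q:ℤ)+4-1 < ⌈((4*q+1:ℕ):ℝ) * (3+ε)⌉ :=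
          Int.lt_ceil.mpr (by push_cast; push_cast at hlp; nlinarith)
        push_cast at h ⊢; omega
      · intro m0 h1 h2; interval_cases m0 <;> decide
    · refine le_trans (show 4*q+2 ≤ q*4+2 by omega) (main_step 1 m q 7 2 4 _ rfl ?_ ?_)
      · have h : 12*(q:ℤ)+7-1 < ⌈((4*q+2:ℕ):ℝ) * (3+ε)⌉ :=
          Int.lt_ceil.mpr (by push_cast; push_cast at hlp; nlinarith)
        push_cast at h ⊢; omega
      · intro m0 h1 h2; interval_cases m0 <;> decide
    · refine le_trans (show 4*q+3 ≤ q*4+3 by omega) (main_step 1 m q 10 3 4 _ rfl ?_ ?_)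
      · have h : 12*(q:ℤ)+10-1 < ⌈((4*q+3:ℕ):ℝ) * (3+ε)⌉ :=
          Int.lt_ceil.mpr (by push_cast; push_cast at hlp; nlinarith)
        push_cast at h ⊢; omega
      · intro m0 h1 h2; interval_cases m0 <;> decide
  · -- task 2, a = 12
    show l ≤ ((Finset.Ico m (m + ⌈(l:ℝ) * 12⌉)).filter
      (fun t => S121121211213 t = 2)).card
    refine le_trans (show l ≤ l*1+0 by omega) (main_step 2 m l 0 0 1 _ rfl ?_ ?_)
    · have h : 12*(l:ℤ)+0-1 < ⌈((l:ℕ):ℝ) * 12⌉ :=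
        Int.lt_ceil.mpr (by push_cast; nlinarith)
      push_cast at h ⊢; omega
    · intro m0 _ _; exact Nat.zero_le _
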